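/- Let t ≥ 27, k ∈ {t-1,t}, and let s ≥ t+k+1 satisfy s ≡ t+k-1 (mod 2). Then 2(c(s+2,t,k) - c(s,t,k)) ≥ s+4. -/

import Mathlib

/-!
Write `c(s) = ⌊N(s) / (s - 1)⌋`. Bounding `c(s + 2)` from below by `(N(s + 2) - s) / (s + 1)` and
`c(s)` from above by `N(s) / (s - 1)` reduces the claim to a polynomial inequality in `s, t, k`.
Once denominators are cleared it reads `s³ + 5s - 6 ≥ 2(Q(t) + Q(k))` with `Q(x) = 2x³ - 6x² + x`,
which holds because `s ≥ 2t`.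
-/

def bin3 (n : ℤ) : ℤ := n*(n-1)*(n-2)/6
def dtk (t k : ℤ) : ℤ := t*(t+1)/2 + k*(k+1)/2
def gtk (t k : ℤ) : ℤ := 2 + t*(t+1)*(2*t-5)/6 + k*(k+1)*(2*k-5)/6
def cc (s t k : ℤ) : ℤ := Int.fdiv (bin3 (s+3) - s * dtk t k - 6 - 3*(s-t-k-1)/2 + gtk t k) (s-1)
def dd (s t k : ℤ) : ℤ := bin3 (s+3) - s * dtk t k - 6 - 3*(s-t-k-1)/2 + gtk t k - (s-1) * cc s t k
def gg (s t k : ℤ) : ℤ := cc s t k - 3 - 3*(s-t-k-1)/2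

lemma le_mul_ediv_sub_ediv {a b c e m n : ℤ} (he : 0 ≤ e) (hm : 0 < m) (hn : 0 < n)
    (h : c * (m * n) ≤ e * (m * (b - n + 1) - n * a)) : c ≤ e * (b / n - a / m) := by
  have hb : b - n + 1 ≤ n * (b / n) := by linarith [Int.lt_mul_ediv_self_add (x := b) hn]
  have ha : m * (a / m) ≤ a := Int.mul_ediv_self_le hm.ne'
  have key : c * (m * n) ≤ e * (b / n - a / m) * (m * n) := calc
    c * (m * n) ≤ e * (m * (b - n + 1) - n * a) := h
    _ ≤ e * (m * (n * (b / n)) - n * (m * (a / m))) := by gcongr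
    _ = e * (b / n - a / m) * (m * n) := by ring
  exact le_of_mul_le_mul_right key (mul_pos hm hn)

lemma six_dvd_mul_sub_one_mul_sub_two (n : ℤ) : 6 ∣ n * (n - 1) * (n - 2) := by
  refine (ZMod.intCast_zmod_eq_zero_iff_dvd _ 6).mp ?_
  push_cast
  generalize (n : ZMod 6) = a
  revert a; decide

lemma six_dvd_mul_add_one_mul_two_mul_sub_five (n : ℤ) : 6 ∣ n * (n + 1) * (2 * n - 5) := by
  refine (ZMod.intCast_zmod_eq_zero_iff_dvd _ 6).mp ?_
  push_cast
  generalize (n : ZMod 6) = a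
  revert a; decide

lemma six_mul_bin3 (n : ℤ) : 6 * bin3 n = n * (n - 1) * (n - 2) :=
  Int.mul_ediv_cancel' (six_dvd_mul_sub_one_mul_sub_two n)

lemma two_mul_dtk (t k : ℤ) : 2 * dtk t k = t * (t + 1) + k * (k + 1) := by
  rw [dtk, mul_add, Int.mul_ediv_cancel' (Int.even_mul_succ_self t).two_dvd,
    Int.mul_ediv_cancel' (Int.even_mul_succ_self k).two_dvd]

lemma six_mul_gtk (t k : ℤ) :
    6 * gtk t k = 12 + t * (t + 1) * (2 * t - 5) + k * (k + 1) * (2 * k - 5) := by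
  rw [gtk, mul_add, mul_add, Int.mul_ediv_cancel' (six_dvd_mul_add_one_mul_two_mul_sub_five t),
    Int.mul_ediv_cancel' (six_dvd_mul_add_one_mul_two_mul_sub_five k)]
  norm_num

def ccNum (s t k : ℤ) : ℤ := bin3 (s+3) - s * dtk t k - 6 - 3*(s-t-k-1)/2 + gtk t k

lemma cc_eq_ccNum_ediv {s : ℤ} (t k : ℤ) (hs : 0 ≤ s - 1) : cc s t k = ccNum s t k / (s - 1) :=
  Int.fdiv_eq_ediv_of_nonneg _ hs

lemma six_mul_ccNum {s t k : ℤ} (h : 2 ∣ s - t - k - 1) :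
    6 * ccNum s t k = (s + 3) * (s + 2) * (s + 1) - 3 * s * (t * (t + 1) + k * (k + 1))
      - 9 * (s - t - k - 1) - 24 + t * (t + 1) * (2 * t - 5) + k * (k + 1) * (2 * k - 5) := by
  have h3 : 2 * (3 * (s - t - k - 1) / 2) = 3 * (s - t - k - 1) :=
    Int.mul_ediv_cancel' (h.mul_left 3)
  rw [ccNum]
  linear_combination six_mul_bin3 (s + 3) - 3 * s * two_mul_dtk t k - 3 * h3 + six_mul_gtk t k

/-- Three times the slack in `le_mul_ediv_sub_ediv` for `c = s + 4`, `e = 2`, `m = s - 1`,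
`n = s + 1`, `a = ccNum s t k`, `b = ccNum (s + 2) t k`. -/
lemma ccNum_gap {s t k : ℤ} (h : 2 ∣ s - t - k - 1) :
    3 * (2 * ((s - 1) * (ccNum (s + 2) t k - (s + 1) + 1) - (s + 1) * ccNum s t k)
        - (s + 4) * ((s - 1) * (s + 1)))
      = s ^ 3 + 5 * s - 6 - 2 * ((2 * t ^ 3 - 6 * t ^ 2 + t) + (2 * k ^ 3 - 6 * k ^ 2 + k)) := by
  have h2 : 2 ∣ s + 2 - t - k - 1 := by omega
  linear_combination (s - 1) * six_mul_ccNum h2 - (s + 1) * six_mul_ccNum h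

lemma two_mul_cubic_add_cubic_le {s t k : ℤ} (ht : 1 ≤ t) (hk : k = t - 1 ∨ k = t) (hs : t + k + 1 ≤ s) :
    2 * ((2 * t ^ 3 - 6 * t ^ 2 + t) + (2 * k ^ 3 - 6 * k ^ 2 + k)) ≤ s ^ 3 + 5 * s - 6 := by
  have hcube : (2 * t) ^ 3 ≤ s ^ 3 := pow_le_pow_left₀ (by omega) (by omega) 3
  have hsq : t ≤ t ^ 2 := by nlinarith
  rcases hk with rfl | rfl <;> nlinarith

theorem stmt9 (t k s : ℤ) (ht : 27 ≤ t) (hk : k = t - 1 ∨ k = t)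
    (hs : t + k + 1 ≤ s) (hpar : (2:ℤ) ∣ (s - (t+k-1))) :
    s + 4 ≤ 2 * (cc (s+2) t k - cc s t k) := by
  have hpar' : 2 ∣ s - t - k - 1 := by omega
  rw [cc_eq_ccNum_ediv t k (by omega), cc_eq_ccNum_ediv t k (by omega), show s + 2 - 1 = s + 1 by ring]
  refine le_mul_ediv_sub_ediv zero_le_two (by omega) (by omega) ?_
  linarith [ccNum_gap hpar', two_mul_cubic_add_cubic_le (by omega) hk hs]
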